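/- arXiv:2310.00580 — 6 statements merged into one kernel-verified Lean document; each statement's English description precedes it below -/
import Mathlib

section
/- Let G be a connected graph rooted at r, and let w be a valid weight function on G (i.e., w(r)=0, w(v)>0 for all v≠r, and every r-unsolvable pebble configuration p satisfies w(p) ≤ w(1_G), where 1_G assigns one pebble to each vertex). Let m = min over v ≠ r of w(v). Then the rooted pebbling number satisfies π(G,r) ≤ ⌊w(1_G)/m⌋ + 1. -/
open SimpleGraph Finset

def PebMove {V : Type*} [DecidableEq V] (G : SimpleGraph V) (p q : V → ℕ) : Prop :=
  ∃ u v, G.Adj u v ∧ 2 ≤ p u ∧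
    q = fun x => if x = u then p u - 2 else if x = v then p v + 1 else p x

def Solvable {V : Type*} [DecidableEq V] (G : SimpleGraph V) (r : V) (p : V → ℕ) : Prop :=
  ∃ q, Relation.ReflTransGen (PebMove G) p q ∧ 1 ≤ q r

noncomputable def confWeight {V : Type*} [Fintype V] (w : V → ℝ) (p : V → ℕ) : ℝ :=
  ∑ v, (p v : ℝ) * w v

def ValidWeight {V : Type*} [Fintype V] [DecidableEq V] (G : SimpleGraph V) (r : V)
    (w : V → ℝ) : Prop :=
  w r = 0 ∧ (∀ v, v ≠ r → 0 < w v) ∧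
    ∀ p : V → ℕ, ¬ Solvable G r p → confWeight w p ≤ confWeight w (fun _ => 1)

noncomputable def rootedPebblingNumber {V : Type*} [Fintype V] [DecidableEq V]
    (G : SimpleGraph V) (r : V) : ℕ :=
  sInf {N | ∀ p : V → ℕ, N ≤ ∑ v, p v → Solvable G r p}

noncomputable def pebblingNumber {V : Type*} [Fintype V] [DecidableEq V]
    (G : SimpleGraph V) : ℕ :=
  sInf {N | ∀ (r : V) (p : V → ℕ), N ≤ ∑ v, p v → Solvable G r p}

def cubeGraph (n : ℕ) : SimpleGraph (Fin n → Bool) :=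
  SimpleGraph.fromRel (fun x y => hammingDist x y = 1)

def addPendant {V : Type*} (G : SimpleGraph V) (a : V) : SimpleGraph (Option V) :=
  SimpleGraph.fromRel (fun x y =>
    match x, y with
    | some u, some v => G.Adj u v
    | none, some u => u = a
    | _, _ => False)

def lollipop (n m : ℕ) : SimpleGraph (Fin (n + 1) ⊕ Fin (m + 1)) :=
  SimpleGraph.fromRel (fun x y =>
    match x, y with
    | Sum.inl i, Sum.inl j => (i : ℕ) + 1 = (j : ℕ)
    | Sum.inl i, Sum.inr j => i = 0 ∧ j ≠ 0
    | Sum.inr i, Sum.inr j => i = 0 ∧ j ≠ 0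
    | _, _ => False)

/-!
An unsolvable configuration has no pebble on the root, so each of its pebbles weighs at
least `m` and its weight is at least `m` times its size. Validity bounds that weight by
`w(1_G)`, so unsolvable configurations have at most `⌊w(1_G) / m⌋` pebbles.
-/

lemma pos_root_solvable {V : Type*} [DecidableEq V] (G : SimpleGraph V) {r : V}
    {p : V → ℕ} (hp : p r ≠ 0) : Solvable G r p :=
  ⟨p, .refl, Nat.one_le_iff_ne_zero.2 hp⟩

lemma mul_sum_le_confWeight {V : Type*} [Fintype V] {w : V → ℝ} {p : V → ℕ} {m : ℝ}
    (hm : ∀ v, p v ≠ 0 → m ≤ w v) : m * ∑ v, (p v : ℝ) ≤ confWeight w p := by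
  rw [Finset.mul_sum, confWeight]
  refine Finset.sum_le_sum fun v _ => ?_
  by_cases hv : p v = 0
  · simp [hv]
  · rw [mul_comm]
    exact mul_le_mul_of_nonneg_left (hm v hv) (Nat.cast_nonneg _)

lemma rootedPebblingNumber_le_of_unsolvable_le {V : Type*} [Fintype V] [DecidableEq V]
    (G : SimpleGraph V) (r : V) {N : ℕ}
    (h : ∀ p : V → ℕ, ¬ Solvable G r p → ∑ v, p v ≤ N) :
    rootedPebblingNumber G r ≤ N + 1 := by
  refine Nat.sInf_le fun p hp => ?_
  by_contra hns
  exact absurd (h p hns) (by omega)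

lemma ValidWeight.sum_le_floor_of_not_solvable {V : Type*} [Fintype V] [DecidableEq V]
    {G : SimpleGraph V} {r : V} {w : V → ℝ} (hw : ValidWeight G r w) {m : ℝ} (hm0 : 0 < m)
    (hm : ∀ v, v ≠ r → m ≤ w v) {p : V → ℕ} (hp : ¬ Solvable G r p) :
    ∑ v, p v ≤ ⌊confWeight w (fun _ => 1) / m⌋₊ := by
  have hpm : ∀ v, p v ≠ 0 → m ≤ w v := fun v hv =>
    hm v fun hvr => hp (pos_root_solvable G (hvr ▸ hv))
  refine Nat.le_floor ?_
  rw [le_div_iff₀ hm0, Nat.cast_sum, mul_comm]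
  exact (mul_sum_le_confWeight hpm).trans (hw.2.2 p hp)

theorem stmt0_general {V : Type*} [Fintype V] [DecidableEq V]
    (G : SimpleGraph V) (r : V) (w : V → ℝ)
    (hw : ValidWeight G r w) (m : ℝ)
    (hm : IsLeast {x : ℝ | ∃ v, v ≠ r ∧ w v = x} m) :
    rootedPebblingNumber G r ≤ ⌊confWeight w (fun _ => 1) / m⌋₊ + 1 := by
  obtain ⟨⟨v₀, hv₀, rfl⟩, hmin⟩ := hm
  refine rootedPebblingNumber_le_of_unsolvable_le G r fun p hp => ?_
  exact hw.sum_le_floor_of_not_solvable (hw.2.1 v₀ hv₀) (fun v hv => hmin ⟨v, hv, rfl⟩) hp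

theorem stmt0 {V : Type*} [Fintype V] [DecidableEq V] [Nontrivial V]
    (G : SimpleGraph V) (hG : G.Connected) (r : V) (w : V → ℝ)
    (hw : ValidWeight G r w) (m : ℝ)
    (hm : IsLeast {x : ℝ | ∃ v, v ≠ r ∧ w v = x} m) :
    rootedPebblingNumber G r ≤ ⌊confWeight w (fun _ => 1) / m⌋₊ + 1 :=
  stmt0_general G r w hw m hm
end

section
/- (Conic Lemma) Let G be a graph rooted at r, and let G_1, …, G_m be connected subgraphs of G each containing r. Let w_1, …, w_m be valid weight functions on G_1, …, G_m respectively (extended by 0 to all of V(G)), and let a_1, …, a_m be non-negative reals. Define w = Σ_i a_i·w_i. If w(v) > 0 for every v ≠ r, then w is a valid weight function on G: every r-unsolvable configuration p on G satisfies w(p) ≤ w(1_G). -/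
/-! The weight of a configuration is linear in the weight function, so `W(p) = ∑ aᵢ wᵢ(p)`, and it
suffices to bound each `wᵢ(p)`. Since `wᵢ` vanishes off `Gᵢ`, `wᵢ(p)` is the weight of the
restriction of `p` to `Gᵢ`; that restriction is `r`-unsolvable in `Gᵢ`, because a pebbling
sequence in `Gᵢ` runs unchanged in `G` with the pebbles outside `Gᵢ` left in place. -/

open SimpleGraph Finset

lemma extend_val_of_notMem {V : Type*} {S : Set V} (q : S → ℕ) (p : V → ℕ) {x : V} (hx : x ∉ S) :
    Function.extend Subtype.val q p x = p x :=
  Function.extend_apply' _ _ _ fun ⟨y, hy⟩ => hx (hy ▸ y.2)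

section Subgraph

variable {V : Type*} [DecidableEq V] {G : SimpleGraph V} {H : G.Subgraph}

-- `Function.extend Subtype.val q p` is `q` on `H.verts` and `p` off it.
lemma PebMove.of_subgraph {q q' : H.verts → ℕ} (h : PebMove H.coe q q') (p : V → ℕ) :
    PebMove G (Function.extend Subtype.val q p) (Function.extend Subtype.val q' p) := by
  obtain ⟨u, v, huv, hu, rfl⟩ := h
  refine ⟨u, v, H.adj_sub huv, by rwa [Subtype.val_injective.extend_apply], funext fun x => ?_⟩
  by_cases hx : x ∈ H.verts
  · lift x to H.verts using hx
    simp only [Subtype.val_injective.extend_apply, Subtype.val_inj]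
  · have hxu : x ≠ u := fun h => hx (h ▸ u.2)
    have hxv : x ≠ v := fun h => hx (h ▸ v.2)
    simp only [extend_val_of_notMem _ _ hx, hxu, hxv, if_false]

lemma Solvable.of_subgraph {r : V} (hr : r ∈ H.verts) {p : V → ℕ}
    (h : Solvable H.coe ⟨r, hr⟩ (fun v => p v.1)) : Solvable G r p := by
  obtain ⟨q, hpq, hq⟩ := h
  have hp : Function.extend Subtype.val (fun v : H.verts => p v.1) p = p := by
    funext x
    by_cases hx : x ∈ H.verts
    · lift x to H.verts using hx
      exact Subtype.val_injective.extend_apply _ _ _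
    · exact extend_val_of_notMem _ _ hx
  refine ⟨Function.extend Subtype.val q p, ?_, ?_⟩
  · have := Relation.ReflTransGen.lift _ (fun _ _ h => PebMove.of_subgraph h p) _ _ hpq
    rwa [Function.onFun, hp] at this
  · rwa [show r = ((⟨r, hr⟩ : H.verts) : V) from rfl, Subtype.val_injective.extend_apply]

end Subgraph

section confWeight

variable {V : Type*} [Fintype V]

lemma confWeight_congr {w : V → ℝ} {p q : V → ℕ} (h : ∀ v, w v ≠ 0 → p v = q v) :
    confWeight w p = confWeight w q :=
  Finset.sum_congr rfl fun v _ => by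
    by_cases hv : w v = 0
    · simp [hv]
    · rw [h v hv]

lemma confWeight_sum_mul {ι : Type*} (s : Finset ι) (a : ι → ℝ) (w : ι → V → ℝ) (p : V → ℕ) :
    confWeight (fun v => ∑ i ∈ s, a i * w i v) p = ∑ i ∈ s, a i * confWeight (w i) p := by
  simp only [confWeight, Finset.mul_sum]
  rw [Finset.sum_comm]
  exact Finset.sum_congr rfl fun _ _ => Finset.sum_congr rfl fun _ _ => by ring

end confWeight

theorem stmt4_general {V : Type*} [Fintype V] [DecidableEq V] (G : SimpleGraph V) (r : V)
    (m : ℕ) (H : Fin m → G.Subgraph)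
    (hr : ∀ i, r ∈ (H i).verts)
    (w : Fin m → V → ℝ)
    (hzero : ∀ i, ∀ v ∉ (H i).verts, w i v = 0)
    (hvalid : ∀ i, ∀ p : V → ℕ, (∀ v ∉ (H i).verts, p v = 0) →
      ¬ Solvable ((H i).coe) ⟨r, hr i⟩ (fun v => p v.1) →
      confWeight (w i) p ≤ confWeight (w i) (fun _ => 1))
    (a : Fin m → ℝ) (ha : ∀ i, 0 ≤ a i)
    (W : V → ℝ) (hW : W = fun v => ∑ i, a i * w i v) :
    ∀ p : V → ℕ, ¬ Solvable G r p → confWeight W p ≤ confWeight W (fun _ => 1) := by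
  intro p hp
  subst hW
  rw [confWeight_sum_mul, confWeight_sum_mul]
  refine Finset.sum_le_sum fun i _ => mul_le_mul_of_nonneg_left ?_ (ha i)
  have hp_i : ¬ Solvable (H i).coe ⟨r, hr i⟩ (fun v => (H i).verts.indicator p v) := by
    simpa only [Set.indicator_of_mem (Subtype.property _)] using
      mt (Solvable.of_subgraph (hr i)) hp
  calc confWeight (w i) p = confWeight (w i) ((H i).verts.indicator p) :=
        confWeight_congr fun v hv =>
          (Set.indicator_of_mem (not_imp_comm.mp (hzero i v) hv) p).symm
    _ ≤ confWeight (w i) (fun _ => 1) :=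
        hvalid i _ (fun v hv => Set.indicator_of_notMem hv p) hp_i

theorem stmt4 {V : Type*} [Fintype V] [DecidableEq V] (G : SimpleGraph V) (r : V)
    (m : ℕ) (H : Fin m → G.Subgraph)
    (hr : ∀ i, r ∈ (H i).verts) (hconn : ∀ i, (H i).Connected)
    (w : Fin m → V → ℝ)
    (hzero : ∀ i, ∀ v ∉ (H i).verts, w i v = 0)
    (hroot : ∀ i, w i r = 0)
    (hpos : ∀ i, ∀ v ∈ (H i).verts, v ≠ r → 0 < w i v)
    (hvalid : ∀ i, ∀ p : V → ℕ, (∀ v ∉ (H i).verts, p v = 0) →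
      ¬ Solvable ((H i).coe) ⟨r, hr i⟩ (fun v => p v.1) →
      confWeight (w i) p ≤ confWeight (w i) (fun _ => 1))
    (a : Fin m → ℝ) (ha : ∀ i, 0 ≤ a i)
    (W : V → ℝ) (hW : W = fun v => ∑ i, a i * w i v)
    (hWpos : ∀ v, v ≠ r → 0 < W v) :
    ∀ p : V → ℕ, ¬ Solvable G r p → confWeight W p ≤ confWeight W (fun _ => 1) :=
  stmt4_general G r m H hr w hzero hvalid a ha W hW
end

section
/- For every positive integer k, the pebbling number of the odd cycle C_{2k+1} equals 2·⌊2^{k+1}/3⌋ + 1. -/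
open SimpleGraph Finset

/-!
Upper bound. Along a path `r = v₀, v₁, …, v_m`, pushing pebbles greedily towards `r`
delivers `⌊(∑ d, p(v_d) 2^(m-d)) / 2^m⌋` pebbles to `r`. From any root, the cycle `C_{2k+1}`
contains two such paths of length `k + 1`, one in each direction, both ending at the pair of
vertices opposite `r`. Every vertex gets weight at least `3` from the two paths together
(`2 + 1` on the opposite pair, at least `4` from one of the paths elsewhere), so an unsolvable
configuration has `3 |p| ≤ 2 (2^(k+1) - 1)`, that is, `|p| ≤ 2 ⌊2^(k+1)/3⌋`.

Lower bound. Put `⌊2^(k+1)/3⌋` pebbles on each of the two vertices opposite `r = 0`. The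
potential `x ↦ 2^(2k+1-x)` and its mirror image `x ↦ 2^(2k+1-(-x))` both start below
`2^(2k+1)`, and a move can raise one of them only by entering `r` from the side where it is
smallest; that move needs two pebbles on a neighbour of `r`, where the other potential is
already `2^(2k)`.
-/

section Pebbling

variable {V : Type*}

def pathWeight (f : ℕ → V) (m : ℕ) (p : V → ℕ) : ℕ :=
  ∑ d ∈ range (m + 1), p (f d) * 2 ^ (m - d)

theorem pathWeight_succ (f : ℕ → V) (m : ℕ) (p : V → ℕ) :
    pathWeight f (m + 1) p = 2 * pathWeight f m p + p (f (m + 1)) := by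
  rw [pathWeight, sum_range_succ, pathWeight, mul_sum, Nat.sub_self, pow_zero, mul_one]
  congr 1
  refine sum_congr rfl fun d hd => ?_
  rw [show m + 1 - d = m - d + 1 by have := mem_range.1 hd; omega, pow_succ]
  ring

variable [DecidableEq V]

def pathCoeff (f : ℕ → V) (m : ℕ) (v : V) : ℕ :=
  ∑ d ∈ range (m + 1), if f d = v then 2 ^ (m - d) else 0

theorem pow_le_pathCoeff (f : ℕ → V) {m d : ℕ} (hd : d ≤ m) :
    2 ^ (m - d) ≤ pathCoeff f m (f d) := by
  have := single_le_sum (f := fun d' => if f d' = f d then 2 ^ (m - d') else 0)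
    (fun _ _ => Nat.zero_le _) (mem_range.2 (Nat.lt_succ_of_le hd))
  simpa [pathCoeff] using this

variable {G : SimpleGraph V}

theorem reflTransGen_pebMove_pairs {u v : V} (huv : G.Adj u v) (s : ℕ) {p : V → ℕ}
    (hp : 2 * s ≤ p u) : Relation.ReflTransGen (PebMove G) p
      (fun x => if x = u then p u - 2 * s else if x = v then p v + s else p x) := by
  have hvu : v ≠ u := huv.ne'
  induction s generalizing p with
  | zero =>
    convert Relation.ReflTransGen.refl using 1
    funext x
    split_ifs <;> simp_all
  | succ s ih =>
    let p₁ := fun x => if x = u then p u - 2 else if x = v then p v + 1 else p x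
    have hmove : PebMove G p p₁ := ⟨u, v, huv, by omega, rfl⟩
    have hp₁ : 2 * s ≤ p₁ u := by simp only [p₁, ↓reduceIte]; omega
    convert Relation.ReflTransGen.head hmove (ih hp₁) using 1
    funext x
    by_cases hxu : x = u
    · subst hxu; simp only [p₁, ↓reduceIte]; omega
    · by_cases hxv : x = v
      · subst hxv; simp only [p₁, hvu, ↓reduceIte]; omega
      · simp [p₁, hxu, hxv]

theorem exists_reach_pathWeight_div (f : ℕ → V) (m : ℕ)
    (hadj : ∀ d < m, G.Adj (f (d + 1)) (f d)) (hinj : Set.InjOn f (Set.Iic m)) (p : V → ℕ) :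
    ∃ q, Relation.ReflTransGen (PebMove G) p q ∧ pathWeight f m p / 2 ^ m ≤ q (f 0) := by
  induction m generalizing p with
  | zero => exact ⟨p, .refl, by simp [pathWeight]⟩
  | succ m ih =>
    have hne : ∀ {d d'}, d ≤ m + 1 → d' ≤ m + 1 → d ≠ d' → f d ≠ f d' :=
      fun hd hd' => hinj.ne hd hd'
    -- Empty the far end `f (m + 1)` into `f m` first; this halves the weight of the path.
    set s := p (f (m + 1)) / 2
    let p' := fun x => if x = f (m + 1) then p (f (m + 1)) - 2 * s
      else if x = f m then p (f m) + s else p x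
    have hpp' := reflTransGen_pebMove_pairs (hadj m (by omega)) s (p := p) (by omega)
    have hweight : pathWeight f m p' = pathWeight f (m + 1) p / 2 := by
      have hlow : ∑ d ∈ range m, p' (f d) * 2 ^ (m - d) =
          ∑ d ∈ range m, p (f d) * 2 ^ (m - d) :=
        sum_congr rfl fun d hd => by
          have := mem_range.1 hd
          simp [p', hne (d := d) (d' := m + 1) (by omega) le_rfl (by omega),
            hne (d := d) (d' := m) (by omega) (by omega) (by omega)]
      rw [pathWeight_succ, pathWeight, sum_range_succ, hlow, pathWeight, sum_range_succ]
      simp only [p', hne (d := m) (d' := m + 1) (by omega) le_rfl (by omega), ↓reduceIte,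
        Nat.sub_self, pow_zero, mul_one]
      omega
    obtain ⟨q, hq, hq0⟩ := ih (fun d hd => hadj d (by omega))
      (hinj.mono (Set.Iic_subset_Iic.2 (Nat.le_succ m))) p'
    refine ⟨q, hpp'.trans hq, ?_⟩
    rwa [hweight, Nat.div_div_eq_div_mul, ← pow_succ'] at hq0

theorem solvable_of_pow_le_pathWeight (f : ℕ → V) (m : ℕ)
    (hadj : ∀ d < m, G.Adj (f (d + 1)) (f d)) (hinj : Set.InjOn f (Set.Iic m)) {p : V → ℕ}
    (hp : 2 ^ m ≤ pathWeight f m p) : Solvable G (f 0) p := by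
  obtain ⟨q, hq, hq0⟩ := exists_reach_pathWeight_div f m hadj hinj p
  exact ⟨q, hq, (Nat.one_le_div_iff (by positivity)).2 hp |>.trans hq0⟩

variable [Fintype V]

theorem pathWeight_eq_sum_mul_pathCoeff (f : ℕ → V) (m : ℕ) (p : V → ℕ) :
    pathWeight f m p = ∑ v, p v * pathCoeff f m v := by
  simp only [pathWeight, pathCoeff, mul_sum, mul_ite, mul_zero]
  rw [sum_comm]
  simp

theorem sum_pi_single_add_mul (a b : V) (t : ℕ) (w : V → ℕ) :
    ∑ x, (Pi.single a t + Pi.single b t : V → ℕ) x * w x = t * w a + t * w b := by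
  simp [Pi.single_apply, add_mul, sum_add_distrib, ite_mul]

theorem sum_mul_pebMove {p : V → ℕ} {u v : V} (huv : u ≠ v) (hu : 2 ≤ p u) (w : V → ℕ) :
    ∑ x, (if x = u then p u - 2 else if x = v then p v + 1 else p x) * w x + 2 * w u =
      ∑ x, p x * w x + w v := by
  have hpoint : ∀ x, (if x = u then p u - 2 else if x = v then p v + 1 else p x) * w x +
      (if x = u then 2 * w u else 0) = p x * w x + (if x = v then w v else 0) := by
    intro x
    obtain ⟨c, hc⟩ : ∃ c, p u = c + 2 := ⟨p u - 2, by omega⟩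
    by_cases hxu : x = u
    · subst hxu
      simp only [hc, huv, ↓reduceIte, add_tsub_cancel_right, add_zero]
      ring
    · by_cases hxv : x = v
      · subst hxv; simp only [hxu, ↓reduceIte, add_zero]; ring
      · simp [hxu, hxv]
  have := sum_congr rfl fun x (_ : x ∈ univ) => hpoint x
  simpa [sum_add_distrib] using this

theorem not_solvable_of_weights {ι : Type*} (w : ι → V → ℕ) (M : ℕ) {r : V} (i₀ : ι)
    (hr : M ≤ w i₀ r)
    (hedge : ∀ a b, G.Adj a b → ∀ i, w i b ≤ 2 * w i a ∨ ∃ j, M ≤ 2 * w j a)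
    {p : V → ℕ} (hp : ∀ i, ∑ v, p v * w i v < M) : ¬ Solvable G r p := by
  rintro ⟨q, hpq, hq⟩
  have hterm : ∀ (q : V → ℕ) i a, q a * w i a ≤ ∑ v, q v * w i v := fun q i a =>
    single_le_sum (f := fun v => q v * w i v) (fun _ _ => Nat.zero_le _) (mem_univ a)
  -- A move out of `a` changes `∑ q * w i` by `w i b - 2 * w i a`; when this is positive,
  -- `hedge` says the two pebbles on `a` already give `∑ q * w j ≥ M` for some `j`.
  have hinv : ∀ i, ∑ v, q v * w i v < M := by
    clear hq
    induction hpq with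
    | refl => exact hp
    | tail _ hmove ih =>
      obtain ⟨a, b, hab, ha, rfl⟩ := hmove
      intro i
      dsimp only
      have hsum := sum_mul_pebMove hab.ne ha (w i)
      rcases hedge a b hab i with h | ⟨j, hj⟩
      · have := ih i
        omega
      · have := (Nat.mul_le_mul_right (w j a) ha).trans (hterm _ j a)
        have := ih j
        omega
  have := (Nat.mul_le_mul_right (w i₀ r) hq).trans (hterm q i₀ r)
  have := hinv i₀
  omega

theorem pebblingNumber_eq_of {N : ℕ} (hup : ∀ r p, N ≤ ∑ v, p v → Solvable G r p)
    (hlow : ∃ r p, ∑ v, p v + 1 = N ∧ ¬ Solvable G r p) : pebblingNumber G = N := by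
  refine le_antisymm (Nat.sInf_le hup) (le_csInf ⟨N, hup⟩ fun M hM => ?_)
  obtain ⟨r, p, hp, hns⟩ := hlow
  by_contra h
  exact hns (hM r p (by omega))

end Pebbling

section Cycle

open Fin.NatCast Fin.CommRing

variable {k : ℕ}

theorem cycleGraph_adj_iff (hk : 1 ≤ k) {a b : Fin (2 * k + 1)} :
    (cycleGraph (2 * k + 1)).Adj a b ↔ a = b + 1 ∨ b = a + 1 := by
  have h1 : ((1 : Fin (2 * k + 1)) : ℕ) = 1 := by
    rw [Fin.val_one']; exact Nat.mod_eq_of_lt (by omega)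
  have hval : ∀ x : Fin (2 * k + 1), x.val = 1 ↔ x = 1 := fun x => by rw [Fin.ext_iff, h1]
  rw [cycleGraph_adj', hval, hval, sub_eq_iff_eq_add', sub_eq_iff_eq_add']

theorem natCast_injOn_Iic (hk : 1 ≤ k) :
    Set.InjOn (Nat.cast : ℕ → Fin (2 * k + 1)) (Set.Iic (k + 1)) := by
  have hlt : k + 1 < 2 * k + 1 := by linarith [hk]
  intro i hi j hj h
  have := congrArg Fin.val h
  rwa [Fin.val_cast_of_lt (hi.trans_lt hlt), Fin.val_cast_of_lt (hj.trans_lt hlt)] at this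

theorem three_le_pathCoeff_add (r v : Fin (2 * k + 1)) :
    3 ≤ pathCoeff (fun d : ℕ => r + d) (k + 1) v +
      pathCoeff (fun d : ℕ => r - d) (k + 1) v := by
  have hj : (v - r).val < 2 * k + 1 := (v - r).isLt
  have hv₁ : r + ((v - r).val : Fin (2 * k + 1)) = v := by simp
  have hv₂ : r - ((2 * k + 1 - (v - r).val : ℕ) : Fin (2 * k + 1)) = v := by
    rw [Nat.cast_sub hj.le, Fin.natCast_self, Fin.cast_val_eq_self]; ring
  generalize (v - r).val = j at hj hv₁ hv₂
  have h₁ : j ≤ k + 1 → 2 ^ (k + 1 - j) ≤ pathCoeff (fun d : ℕ => r + d) (k + 1) v :=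
    fun h => hv₁ ▸ pow_le_pathCoeff (fun d : ℕ => r + d) h
  have h₂ : k ≤ j → 2 ^ (j - k) ≤ pathCoeff (fun d : ℕ => r - d) (k + 1) v := fun h => by
    have := pow_le_pathCoeff (fun d : ℕ => r - d) (show 2 * k + 1 - j ≤ k + 1 by omega)
    rwa [hv₂, show k + 1 - (2 * k + 1 - j) = j - k by omega] at this
  obtain h | h | h | h : j + 1 ≤ k ∨ j = k ∨ j = k + 1 ∨ k + 2 ≤ j := by omega
  · have := Nat.pow_le_pow_right two_pos (show 2 ≤ k + 1 - j by omega)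
    have := h₁ (by omega)
    omega
  · have h₁' := h₁ (by omega)
    have h₂' := h₂ (by omega)
    rw [show k + 1 - j = 1 by omega, pow_one] at h₁'
    rw [show j - k = 0 by omega, pow_zero] at h₂'
    omega
  · have h₁' := h₁ (by omega)
    have h₂' := h₂ (by omega)
    rw [show k + 1 - j = 0 by omega, pow_zero] at h₁'
    rw [show j - k = 1 by omega, pow_one] at h₂'
    omega
  · have := Nat.pow_le_pow_right two_pos (show 2 ≤ j - k by omega)
    have := h₂ (by omega)
    omega

theorem three_mul_sum_le_pathWeight_add (r : Fin (2 * k + 1)) (p : Fin (2 * k + 1) → ℕ) :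
    3 * ∑ v, p v ≤ pathWeight (fun d : ℕ => r + d) (k + 1) p +
      pathWeight (fun d : ℕ => r - d) (k + 1) p := by
  rw [pathWeight_eq_sum_mul_pathCoeff, pathWeight_eq_sum_mul_pathCoeff, ← sum_add_distrib,
    mul_sum]
  refine sum_le_sum fun v _ => ?_
  rw [← mul_add, mul_comm]
  exact Nat.mul_le_mul_left _ (three_le_pathCoeff_add r v)

theorem cycleGraph_pathWeight_lt_of_not_solvable (hk : 1 ≤ k) {r : Fin (2 * k + 1)}
    {p : Fin (2 * k + 1) → ℕ} (hp : ¬ Solvable (cycleGraph (2 * k + 1)) r p) :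
    pathWeight (fun d : ℕ => r + d) (k + 1) p < 2 ^ (k + 1) ∧
      pathWeight (fun d : ℕ => r - d) (k + 1) p < 2 ^ (k + 1) := by
  have hadj : ∀ x : Fin (2 * k + 1), (cycleGraph (2 * k + 1)).Adj (x + 1) x :=
    fun x => (cycleGraph_adj_iff hk).2 (Or.inl rfl)
  constructor
  · refine not_le.1 fun h => hp ?_
    simpa using solvable_of_pow_le_pathWeight (fun d : ℕ => r + d) (k + 1)
      (fun d _ => by simp only [Nat.cast_succ, ← add_assoc]; exact hadj _)
      (fun i hi j hj h => natCast_injOn_Iic hk hi hj (add_left_cancel h)) h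
  · refine not_le.1 fun h => hp ?_
    simpa using solvable_of_pow_le_pathWeight (fun d : ℕ => r - d) (k + 1)
      (fun d _ => by convert (hadj (r - (d + 1 : ℕ))).symm using 1; push_cast; ring)
      (fun i hi j hj h => natCast_injOn_Iic hk hi hj (sub_right_injective h)) h

theorem cycleGraph_solvable_of_le_sum (hk : 1 ≤ k) (r : Fin (2 * k + 1))
    (p : Fin (2 * k + 1) → ℕ) (hp : 2 * (2 ^ (k + 1) / 3) + 1 ≤ ∑ v, p v) :
    Solvable (cycleGraph (2 * k + 1)) r p := by
  by_contra hns
  have h₁₂ := cycleGraph_pathWeight_lt_of_not_solvable hk hns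
  have := three_mul_sum_le_pathWeight_add r p
  omega

def cycleWeight (k : ℕ) (x : Fin (2 * k + 1)) : ℕ := 2 ^ (2 * k + 1 - x.val)

theorem cycleWeight_le_or (hk : 1 ≤ k) {a b : Fin (2 * k + 1)}
    (hab : (cycleGraph (2 * k + 1)).Adj a b) :
    cycleWeight k b ≤ 2 * cycleWeight k a ∨ a = 0 ∨ a = -1 := by
  rcases (cycleGraph_adj_iff hk).1 hab with rfl | rfl
  · by_cases hb : b = Fin.last (2 * k)
    · simp [hb]
    · left
      rw [cycleWeight, cycleWeight, Fin.val_add_one, if_neg hb,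
        show 2 * k + 1 - b.val = 2 * k + 1 - (b.val + 1) + 1 by have := Fin.val_lt_last hb; omega,
        pow_succ, mul_comm]
  · by_cases ha : a = Fin.last (2 * k)
    · right; right
      rw [ha, ← Fin.neg_last, neg_neg]
    · left
      rw [cycleWeight, cycleWeight, Fin.val_add_one, if_neg ha]
      calc 2 ^ (2 * k + 1 - (a.val + 1)) ≤ 2 ^ (2 * k + 1 - a.val) :=
            Nat.pow_le_pow_right two_pos (by omega)
        _ ≤ 2 * 2 ^ (2 * k + 1 - a.val) := by omega

theorem three_mul_div_three_lt_two_pow (n : ℕ) : 3 * (2 ^ n / 3) < 2 ^ n := by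
  refine lt_of_le_of_ne (Nat.mul_div_le _ _) fun h => ?_
  have := Nat.Prime.dvd_of_dvd_pow Nat.prime_three (Dvd.intro _ h)
  omega

def mirrorWeights (k : ℕ) (i : Bool) (x : Fin (2 * k + 1)) : ℕ :=
  cycleWeight k (if i then x else -x)

theorem cycleWeight_one (hk : 1 ≤ k) : cycleWeight k 1 = 2 ^ (2 * k) := by
  rw [cycleWeight, Fin.val_one', Nat.mod_eq_of_lt (by omega), Nat.add_sub_cancel]

theorem exists_two_pow_le_mirrorWeights (hk : 1 ≤ k) {a : Fin (2 * k + 1)}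
    (ha : a = 0 ∨ a = 1 ∨ a = -1) : ∃ j, 2 ^ (2 * k + 1) ≤ 2 * mirrorWeights k j a := by
  rcases ha with rfl | rfl | rfl
  · exact ⟨true, by simp [mirrorWeights, cycleWeight]⟩
  · exact ⟨true, by simp [mirrorWeights, cycleWeight_one hk, pow_succ, mul_comm]⟩
  · exact ⟨false, by simp [mirrorWeights, cycleWeight_one hk, pow_succ, mul_comm]⟩

theorem mirrorWeights_le_or_exists (hk : 1 ≤ k) {a b : Fin (2 * k + 1)}
    (hab : (cycleGraph (2 * k + 1)).Adj a b) (i : Bool) :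
    mirrorWeights k i b ≤ 2 * mirrorWeights k i a ∨
      ∃ j, 2 ^ (2 * k + 1) ≤ 2 * mirrorWeights k j a := by
  cases i
  · have hab' : (cycleGraph (2 * k + 1)).Adj (-a) (-b) := by
      rw [cycleGraph_adj', neg_sub_neg, neg_sub_neg]
      exact (cycleGraph_adj'.1 hab).symm
    rcases cycleWeight_le_or hk hab' with h | h | h
    · exact Or.inl h
    · exact Or.inr (exists_two_pow_le_mirrorWeights hk (Or.inl (neg_eq_zero.1 h)))
    · exact Or.inr (exists_two_pow_le_mirrorWeights hk (Or.inr (Or.inl (neg_inj.1 h))))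
  · rcases cycleWeight_le_or hk hab with h | h | h
    · exact Or.inl h
    · exact Or.inr (exists_two_pow_le_mirrorWeights hk (Or.inl h))
    · exact Or.inr (exists_two_pow_le_mirrorWeights hk (Or.inr (Or.inr h)))

def antipodalConf (k : ℕ) : Fin (2 * k + 1) → ℕ :=
  Pi.single (k : Fin (2 * k + 1)) (2 ^ (k + 1) / 3) +
    Pi.single ((k + 1 : ℕ) : Fin (2 * k + 1)) (2 ^ (k + 1) / 3)

theorem sum_antipodalConf : ∑ x, antipodalConf k x = 2 * (2 ^ (k + 1) / 3) := by
  simp [antipodalConf, sum_add_distrib, two_mul]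

theorem sum_antipodalConf_mul_mirrorWeights_lt (hk : 1 ≤ k) (i : Bool) :
    ∑ x, antipodalConf k x * mirrorWeights k i x < 2 ^ (2 * k + 1) := by
  have hval : ∀ i ≤ k + 1, ((i : Fin (2 * k + 1)) : ℕ) = i := fun i hi =>
    Fin.val_cast_of_lt (by linarith [hk])
  have hneg : -(k : Fin (2 * k + 1)) = ((k + 1 : ℕ) : Fin (2 * k + 1)) := by
    rw [neg_eq_iff_add_eq_zero, ← Nat.cast_add, show k + (k + 1) = 2 * k + 1 by ring,
      Fin.natCast_self]
  have hwk : cycleWeight k k = 2 ^ (k + 1) := by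
    rw [cycleWeight, hval k (by omega), show 2 * k + 1 - k = k + 1 by omega]
  have hwk1 : cycleWeight k ((k + 1 : ℕ) : Fin (2 * k + 1)) = 2 ^ k := by
    rw [cycleWeight, hval (k + 1) le_rfl, show 2 * k + 1 - (k + 1) = k by omega]
  have hsum : 2 ^ (k + 1) / 3 * 2 ^ (k + 1) + 2 ^ (k + 1) / 3 * 2 ^ k < 2 ^ (2 * k + 1) :=
    calc 2 ^ (k + 1) / 3 * 2 ^ (k + 1) + 2 ^ (k + 1) / 3 * 2 ^ k
        = 3 * (2 ^ (k + 1) / 3) * 2 ^ k := by rw [pow_succ 2 k]; ring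
      _ < 2 ^ (k + 1) * 2 ^ k :=
        Nat.mul_lt_mul_of_pos_right (three_mul_div_three_lt_two_pow (k + 1)) (by positivity)
      _ = 2 ^ (2 * k + 1) := by rw [← pow_add]; ring_nf
  cases i
  · simp only [antipodalConf, mirrorWeights, Bool.false_eq_true, ↓reduceIte,
      sum_pi_single_add_mul, hneg, neg_eq_iff_eq_neg.2 hneg.symm, hwk, hwk1]
    omega
  · simpa only [antipodalConf, mirrorWeights, ↓reduceIte, sum_pi_single_add_mul, hwk, hwk1]

theorem not_solvable_antipodalConf (hk : 1 ≤ k) :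
    ¬ Solvable (cycleGraph (2 * k + 1)) 0 (antipodalConf k) :=
  not_solvable_of_weights (mirrorWeights k) _ true (by simp [mirrorWeights, cycleWeight])
    (fun _ _ hab => mirrorWeights_le_or_exists hk hab) (sum_antipodalConf_mul_mirrorWeights_lt hk)

end Cycle

theorem stmt5 (k : ℕ) (hk : 1 ≤ k) :
    pebblingNumber (cycleGraph (2 * k + 1)) = 2 * (2 ^ (k + 1) / 3) + 1 :=
  pebblingNumber_eq_of (cycleGraph_solvable_of_le_sum hk)
    ⟨0, antipodalConf k, by rw [sum_antipodalConf], not_solvable_antipodalConf hk⟩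
end

section
/- Let G be the graph obtained from the 4-cycle C_4 with vertices a, b, c, d (edges ab, bc, cd, da) by attaching a pendant vertex r adjacent to a. Define w(r)=0, w(a)=2, w(b)=w(d)=2/3, w(c)=1/3. Then w is a valid weight function on G rooted at r: every r-unsolvable configuration p satisfies w(p) ≤ w(1_G) = 11/3. -/
/-!
Scaled by 3, the weights become the integers `0, 6, 2, 1, 2`. A pebbling move from `b` or `d`
to `a`, or from `c` to `b`, never lowers the scaled weight and removes a pebble from `{b, c, d}`.
So as long as `a` holds fewer than two pebbles, some such move is available whenever the scaled
weight is at least `12`; iterating, we end with two pebbles on `a` and one more move reaches `r`.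
Hence `w(p) > 11/3` forces `p` to be `r`-solvable.
-/

open SimpleGraph Finset

/-- The 4-cycle `a b c d` (vertices `1 2 3 4`) with a pendant root `r = 0` attached to `a`. -/
def G7 : SimpleGraph (Fin 5) :=
  SimpleGraph.fromRel (fun x y =>
    (x = 0 ∧ y = 1) ∨ (x = 1 ∧ y = 2) ∨ (x = 2 ∧ y = 3) ∨ (x = 3 ∧ y = 4) ∨ (x = 4 ∧ y = 1))

noncomputable def w7 : Fin 5 → ℝ := ![0, 2, 2/3, 1/3, 2/3]

theorem Solvable.of_pebMove {V : Type*} [DecidableEq V] {G : SimpleGraph V} {r : V}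
    {p q : V → ℕ} (hpq : PebMove G p q) (hq : Solvable G r q) : Solvable G r p :=
  let ⟨q', hqq', hr⟩ := hq
  ⟨q', .head hpq hqq', hr⟩

theorem Solvable.of_adj {V : Type*} [DecidableEq V] {G : SimpleGraph V} {r u : V}
    {p : V → ℕ} (hur : G.Adj u r) (hu : 2 ≤ p u) : Solvable G r p :=
  ⟨_, .single ⟨u, r, hur, hu, rfl⟩, by simp [hur.ne.symm]⟩

theorem G7_adj_one_zero : G7.Adj 1 0 := by rw [G7, fromRel_adj]; decide
theorem G7_adj_two_one : G7.Adj 2 1 := by rw [G7, fromRel_adj]; decide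
theorem G7_adj_four_one : G7.Adj 4 1 := by rw [G7, fromRel_adj]; decide
theorem G7_adj_three_two : G7.Adj 3 2 := by rw [G7, fromRel_adj]; decide

def scaledWeight7 (p : Fin 5 → ℕ) : ℕ := 6 * p 1 + 2 * p 2 + p 3 + 2 * p 4

theorem confWeight_w7 (p : Fin 5 → ℕ) : confWeight w7 p = (scaledWeight7 p : ℝ) / 3 := by
  simp only [confWeight, Fin.sum_univ_five, w7, scaledWeight7]
  push_cast
  simp only [Fin.isValue, mul_zero, zero_add, one_div]
  ring

theorem solvable_G7_of_twelve_le_scaledWeight7 (p : Fin 5 → ℕ) (hp : 12 ≤ scaledWeight7 p) :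
    Solvable G7 0 p := by
  induction hn : p 2 + p 3 + p 4 using Nat.strong_induction_on generalizing p with
  | _ n ih =>
    unfold scaledWeight7 at hp
    by_cases h1 : 2 ≤ p 1
    · exact .of_adj G7_adj_one_zero h1
    by_cases h2 : 2 ≤ p 2
    · refine .of_pebMove ⟨2, 1, G7_adj_two_one, h2, rfl⟩ (ih _ ?_ _ ?_ rfl) <;>
        simp only [scaledWeight7, Fin.isValue, Fin.reduceEq, ↓reduceIte] <;> omega
    by_cases h4 : 2 ≤ p 4
    · refine .of_pebMove ⟨4, 1, G7_adj_four_one, h4, rfl⟩ (ih _ ?_ _ ?_ rfl) <;>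
        simp only [scaledWeight7, Fin.isValue, Fin.reduceEq, ↓reduceIte] <;> omega
    have h3 : 2 ≤ p 3 := by omega
    refine .of_pebMove ⟨3, 2, G7_adj_three_two, h3, rfl⟩ (ih _ ?_ _ ?_ rfl) <;>
      simp only [scaledWeight7, Fin.isValue, Fin.reduceEq, ↓reduceIte] <;> omega

theorem stmt7 :
    confWeight w7 (fun _ => 1) = 11 / 3 ∧
    ∀ p : Fin 5 → ℕ, ¬ Solvable G7 0 p → confWeight w7 p ≤ 11 / 3 := by
  refine ⟨by rw [confWeight_w7]; norm_num [scaledWeight7], fun p hp => ?_⟩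
  by_contra hgt
  have h12 : 12 ≤ scaledWeight7 p := by
    rw [confWeight_w7] at hgt
    have : (11 : ℝ) < scaledWeight7 p := by linarith
    exact_mod_cast this
  exact hp (solvable_G7_of_twelve_le_scaledWeight7 p h12)
end

section
/- For every n ≥ 2, the pebbling number of the n-dimensional hypercube Q_n equals 2^n. -/
open SimpleGraph Finset

/-!
The upper bound is Chung's induction on the dimension, carried out for an arbitrary graph `G`
and its prism `G □ K₂` and transported along `Q_n □ K₂ ≃ Q_{n+1}`. The induction needs a second,
two-pebble statement: if `∑ ⌈p v / 2⌉ > m` then two pebbles can be moved to any root. For a root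
in one copy of `G`, either the near copy already carries enough pebbles, or the far copy can move
two pebbles to the partner of the root and one of them crosses over, or else one first moves just
enough pairs across the matching for the near copy (and, for two pebbles, also the far copy) to
finish. In the two-pebble case the number of such pairs available is controlled by the number of
odd piles, which is where `Fintype.card V ≤ m` enters.

For the lower bound, `2 ^ n - 1` pebbles on the antipode of the root are not enough: the weight
`∑ p v * 2 ^ dist(v, antipode)` never increases under a pebbling move, it starts at `2 ^ n - 1`,
and it is at least `2 ^ n` once the root carries a pebble.
-/

open Function

variable {V W : Type*} {G : SimpleGraph V} {H : SimpleGraph W}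

section Counting

variable [Fintype V]

theorem exists_le_sum_eq (p : V → ℕ) {t : ℕ} (ht : t ≤ ∑ v, p v) :
    ∃ h ≤ p, ∑ v, h v = t := by
  classical
  induction t with
  | zero => exact ⟨0, fun _ => Nat.zero_le _, by simp⟩
  | succ t ih =>
    obtain ⟨h, hle, hsum⟩ := ih (by omega)
    obtain ⟨v, -, hv⟩ := Finset.exists_lt_of_sum_lt (hsum ▸ ht : ∑ v, h v < ∑ v, p v)
    refine ⟨h + Pi.single v 1, fun x => ?_, ?_⟩
    · rcases eq_or_ne x v with rfl | hxv
      · simpa using hv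
      · simpa [hxv] using hle x
    · simp [Finset.sum_add_distrib, hsum]

def ceilHalfSum (p : V → ℕ) : ℕ := ∑ v, (p v + 1) / 2

theorem ceilHalfSum_le_sum (p : V → ℕ) : ceilHalfSum p ≤ ∑ v, p v :=
  Finset.sum_le_sum fun v _ => by omega

theorem sum_div_two_add_ceilHalfSum (p : V → ℕ) :
    ∑ v, p v / 2 + ceilHalfSum p = ∑ v, p v := by
  rw [ceilHalfSum, ← Finset.sum_add_distrib]
  exact Finset.sum_congr rfl fun v _ => by omega

theorem ceilHalfSum_le_sum_div_two_add_card (p : V → ℕ) :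
    ceilHalfSum p ≤ ∑ v, p v / 2 + Fintype.card V := by
  calc ceilHalfSum p ≤ ∑ v, (p v / 2 + 1) := Finset.sum_le_sum fun v _ => by omega
    _ = ∑ v, p v / 2 + Fintype.card V := by simp [Finset.sum_add_distrib]

theorem ceilHalfSum_sub_two_smul_add {p h : V → ℕ} (hh : 2 • h ≤ p) :
    ceilHalfSum (p - 2 • h) + ∑ v, h v = ceilHalfSum p := by
  rw [ceilHalfSum, ceilHalfSum, ← Finset.sum_add_distrib]
  refine Finset.sum_congr rfl fun v _ => ?_
  have := hh v
  simp only [Pi.sub_apply, Pi.smul_apply, smul_eq_mul] at this ⊢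
  omega

end Counting

noncomputable abbrev pushforward (f : V → W) : (V → ℕ) →+ (W → ℕ) :=
  ExtendByZero.hom ℕ f

theorem pushforward_apply {f : V → W} (hf : Injective f) (p : V → ℕ) (v : V) :
    pushforward f p (f v) = p v :=
  hf.extend_apply p 0 v

theorem pushforward_apply_eq_zero {f : V → W} {w : W} (hw : ∀ v, f v ≠ w) (p : V → ℕ) :
    pushforward f p w = 0 :=
  extend_apply' _ _ _ fun ⟨v, hv⟩ => hw v hv

theorem pushforward_comp_of_bijective {f : V → W} (hf : Bijective f) (p : W → ℕ) :
    pushforward f (p ∘ f) = p := by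
  funext w
  obtain ⟨v, rfl⟩ := hf.surjective w
  exact pushforward_apply hf.injective _ v

theorem sum_prod_bool_eq [Fintype V] (f : V × Bool → ℕ) (b : Bool) :
    ∑ x, f x = ∑ v, f (v, b) + ∑ v, f (v, !b) := by
  rw [Fintype.sum_prod_type, ← Finset.sum_add_distrib]
  exact Finset.sum_congr rfl fun v _ => by cases b <;> simp [add_comm]

theorem eq_pushforward_add_pushforward (P : V × Bool → ℕ) (b : Bool) :
    P = pushforward (·, b) (fun v => P (v, b)) + pushforward (·, !b) (fun v => P (v, !b)) := by
  funext ⟨v, c⟩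
  obtain rfl | rfl : c = b ∨ c = !b := by cases b <;> cases c <;> simp
  · simp [pushforward_apply (Prod.mk_left_injective _)]
  · simp [pushforward_apply (Prod.mk_left_injective _)]

variable [DecidableEq V] [DecidableEq W]

theorem pushforward_single {f : V → W} (hf : Injective f) (v : V) (k : ℕ) :
    pushforward f (Pi.single v k) = Pi.single (f v) k := by
  funext w
  by_cases hw : ∃ u, f u = w
  · obtain ⟨u, rfl⟩ := hw
    rw [pushforward_apply hf]
    rcases eq_or_ne u v with rfl | huv
    · simp
    · simp [huv, hf.ne huv]
  · rw [ExtendByZero.hom_apply, extend_apply' _ _ _ hw, Pi.single_apply, if_neg]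
    · rfl
    · rintro rfl; exact hw ⟨v, rfl⟩

theorem pebMove_iff {p q : V → ℕ} :
    PebMove G p q ↔
      ∃ (u v : V) (c : V → ℕ), G.Adj u v ∧ p = c + Pi.single u 2 ∧ q = c + Pi.single v 1 := by
  constructor
  · rintro ⟨u, v, huv, hu, rfl⟩
    refine ⟨u, v, p - Pi.single u 2, huv, ?_, ?_⟩ <;> funext x <;>
      rcases eq_or_ne x u with rfl | hxu
    · simp; omega
    · simp [hxu]
    · simp [huv.ne]
    · rcases eq_or_ne x v with rfl | hxv <;> simp [*]
  · rintro ⟨u, v, c, huv, rfl, rfl⟩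
    refine ⟨u, v, huv, by simp, ?_⟩
    funext x
    rcases eq_or_ne x u with rfl | hxu
    · simp [huv.ne]
    · rcases eq_or_ne x v with rfl | hxv <;> simp [*]

abbrev PebReach (G : SimpleGraph V) : (V → ℕ) → (V → ℕ) → Prop :=
  Relation.ReflTransGen (PebMove G)

theorem PebMove.add_right {p q : V → ℕ} (h : PebMove G p q) (c : V → ℕ) :
    PebMove G (p + c) (q + c) := by
  obtain ⟨u, v, d, huv, rfl, rfl⟩ := pebMove_iff.1 h
  exact pebMove_iff.2 ⟨u, v, d + c, huv, add_right_comm .., add_right_comm ..⟩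

theorem pebReach_add_right {p q : V → ℕ} (h : PebReach G p q) (c : V → ℕ) :
    PebReach G (p + c) (q + c) := by
  induction h with
  | refl => rfl
  | tail _ hmove ih => exact ih.tail (hmove.add_right c)

theorem pebReach_add {p₁ q₁ p₂ q₂ : V → ℕ} (h₁ : PebReach G p₁ q₁) (h₂ : PebReach G p₂ q₂) :
    PebReach G (p₁ + p₂) (q₁ + q₂) :=
  (pebReach_add_right h₁ p₂).trans (by simpa only [add_comm q₁] using pebReach_add_right h₂ q₁)

theorem pebReach_sum {ι : Type*} (s : Finset ι) {p q : ι → V → ℕ}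
    (h : ∀ i ∈ s, PebReach G (p i) (q i)) : PebReach G (∑ i ∈ s, p i) (∑ i ∈ s, q i) := by
  classical
  induction s using Finset.induction_on with
  | empty => simp only [Finset.sum_empty]; rfl
  | insert i s hi ih =>
    rw [Finset.sum_insert hi, Finset.sum_insert hi]
    exact pebReach_add (h i (Finset.mem_insert_self i s))
      (ih fun j hj => h j (Finset.mem_insert_of_mem hj))

theorem pebReach_single_double {u v : V} (huv : G.Adj u v) (k : ℕ) :
    PebReach G (Pi.single u (2 * k)) (Pi.single v k) := by
  induction k with
  | zero => simp only [mul_zero, Pi.single_zero]; rfl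
  | succ k ih =>
    rw [mul_add_one, Pi.single_add, Pi.single_add]
    exact pebReach_add ih
      (.single (pebMove_iff.2 ⟨u, v, 0, huv, (zero_add _).symm, (zero_add _).symm⟩))

/-- `CanPlace G 1 r p` unfolds to `Solvable G r p`. -/
def CanPlace (G : SimpleGraph V) (k : ℕ) (r : V) (p : V → ℕ) : Prop :=
  ∃ q, PebReach G p q ∧ k ≤ q r

namespace CanPlace

variable {k k₁ k₂ : ℕ} {r : V} {p p₁ p₂ : V → ℕ}

theorem add (h₁ : CanPlace G k₁ r p₁) (h₂ : CanPlace G k₂ r p₂) :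
    CanPlace G (k₁ + k₂) r (p₁ + p₂) := by
  obtain ⟨q₁, hq₁, hk₁⟩ := h₁
  obtain ⟨q₂, hq₂, hk₂⟩ := h₂
  exact ⟨q₁ + q₂, pebReach_add hq₁ hq₂, add_le_add hk₁ hk₂⟩

theorem mono (h : CanPlace G k r p₁) (hp : p₁ ≤ p₂) : CanPlace G k r p₂ := by
  obtain ⟨q, hq, hk⟩ := h
  refine ⟨q + (p₂ - p₁), ?_, le_add_right hk⟩
  simpa only [add_tsub_cancel_of_le hp] using pebReach_add_right hq (p₂ - p₁)

theorem of_pebReach (hp : PebReach G p₁ p₂) (h : CanPlace G k r p₂) : CanPlace G k r p₁ := by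
  obtain ⟨q, hq, hk⟩ := h
  exact ⟨q, hp.trans hq, hk⟩

theorem of_adj {a : V} (h : CanPlace G (2 * k) a p) (har : G.Adj a r) : CanPlace G k r p := by
  obtain ⟨q, hq, hk⟩ := h
  have hsplit : (q - Pi.single a (2 * k)) + Pi.single a (2 * k) = q := by
    refine tsub_add_cancel_of_le fun x => ?_
    rcases eq_or_ne x a with rfl | hxa <;> simp [*]
  have hmove := pebReach_add (.refl (a := q - Pi.single a (2 * k))) (pebReach_single_double har k)
  rw [hsplit] at hmove
  exact ⟨_, hq.trans hmove, by simp⟩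

end CanPlace

theorem pebReach_pushforward (f : G ↪g H) {p q : V → ℕ} (h : PebReach G p q) :
    PebReach H (pushforward f p) (pushforward f q) := by
  induction h with
  | refl => rfl
  | tail _ hmove ih =>
    refine ih.tail (pebMove_iff.2 ?_)
    obtain ⟨u, v, c, huv, rfl, rfl⟩ := pebMove_iff.1 hmove
    refine ⟨f u, f v, pushforward f c, f.map_adj_iff.2 huv, ?_, ?_⟩ <;>
      rw [map_add, pushforward_single f.injective]

theorem CanPlace.map (f : G ↪g H) {k : ℕ} {r : V} {p : V → ℕ} (h : CanPlace G k r p) :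
    CanPlace H k (f r) (pushforward f p) := by
  obtain ⟨q, hq, hk⟩ := h
  exact ⟨_, pebReach_pushforward f hq, by rwa [pushforward_apply f.injective]⟩

theorem pebReach_pushforward_double {f g : V → W} (hf : Injective f) (hg : Injective g)
    (hadj : ∀ v, H.Adj (f v) (g v)) [Fintype V] (h : V → ℕ) :
    PebReach H (pushforward f (2 • h)) (pushforward g h) := by
  rw [← Finset.univ_sum_single h, smul_sum, map_sum, map_sum]
  refine pebReach_sum _ fun v _ => ?_
  rw [← Pi.single_smul, pushforward_single hf, pushforward_single hg, smul_eq_mul]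
  exact pebReach_single_double (hadj v) (h v)

section Bounds

variable [Fintype V] [Fintype W] {m : ℕ}

def PebblingBound (G : SimpleGraph V) (m : ℕ) : Prop :=
  ∀ (r : V) (p : V → ℕ), m ≤ ∑ v, p v → CanPlace G 1 r p

def TwoPebblingBound (G : SimpleGraph V) (m : ℕ) : Prop :=
  ∀ (r : V) (p : V → ℕ), m + 1 ≤ ceilHalfSum p → CanPlace G 2 r p

theorem pebblingNumber_le (h : PebblingBound G m) : pebblingNumber G ≤ m :=
  Nat.sInf_le h

theorem sum_lt_pebblingNumber (h : PebblingBound G m) {r : V} {p : V → ℕ}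
    (hp : ¬ Solvable G r p) : ∑ v, p v < pebblingNumber G :=
  lt_of_not_ge fun hle => hp (Nat.sInf_mem (⟨m, h⟩ : ∃ m, PebblingBound G m) r p hle)

theorem sum_mul_weight_le_of_pebReach (w : V → ℕ) (hw : ∀ u v, G.Adj u v → w v ≤ 2 * w u)
    {p q : V → ℕ} (h : PebReach G p q) : ∑ v, q v * w v ≤ ∑ v, p v * w v := by
  induction h with
  | refl => rfl
  | tail _ hmove ih =>
    obtain ⟨u, v, c, huv, rfl, rfl⟩ := pebMove_iff.1 hmove
    have := hw u v huv
    simp only [Pi.add_apply, add_mul, Finset.sum_add_distrib, Pi.single_apply, ite_mul,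
      zero_mul, Finset.sum_ite_eq', Finset.mem_univ, if_true] at ih ⊢
    omega

theorem not_solvable_of_weight (w : V → ℕ) (hw : ∀ u v, G.Adj u v → w v ≤ 2 * w u)
    {r : V} {p : V → ℕ} (hp : ∑ v, p v * w v < w r) : ¬ Solvable G r p := by
  rintro ⟨q, hq, hr⟩
  have hq_r : w r ≤ ∑ v, q v * w v :=
    (Nat.le_mul_of_pos_left _ hr).trans
      (Finset.single_le_sum (f := fun v => q v * w v) (fun v _ => Nat.zero_le _)
        (Finset.mem_univ r))
  have := sum_mul_weight_le_of_pebReach w hw hq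
  omega

theorem PebblingBound.of_iso (e : G ≃g H) (h : PebblingBound G m) : PebblingBound H m := by
  intro r P hP
  have := (h (e.symm r) (P ∘ e) (hP.trans_eq (e.toEquiv.sum_comp P).symm)).map e.toEmbedding
  simpa [pushforward_comp_of_bijective e.bijective] using this

theorem TwoPebblingBound.of_iso (e : G ≃g H) (h : TwoPebblingBound G m) :
    TwoPebblingBound H m := by
  intro r P hP
  have := (h (e.symm r) (P ∘ e)
    (hP.trans_eq (e.toEquiv.sum_comp fun w => (P w + 1) / 2).symm)).map e.toEmbedding
  simpa [pushforward_comp_of_bijective e.bijective] using this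

end Bounds

section BoxProdTop

variable {m : ℕ}

theorem CanPlace.boxProd_top_near {k : ℕ} {r : V} {p : V → ℕ} (h : CanPlace G k r p)
    (b : Bool) :
    CanPlace (G □ (⊤ : SimpleGraph Bool)) k (r, b) (pushforward (·, b) p) :=
  h.map (G.boxProdLeft ⊤ b)

theorem CanPlace.boxProd_top_far {r : V} {p : V → ℕ} (h : CanPlace G 2 r p) (b : Bool) :
    CanPlace (G □ (⊤ : SimpleGraph Bool)) 1 (r, b) (pushforward (·, !b) p) :=
  (h.map (G.boxProdLeft ⊤ !b)).of_adj (by simp)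

theorem CanPlace.of_transfer [Fintype V] {k : ℕ} {r : V} {pN pF h : V → ℕ} (hh : 2 • h ≤ pF)
    (b : Bool) (hc : CanPlace (G □ (⊤ : SimpleGraph Bool)) k (r, b)
      (pushforward (·, b) (pN + h) + pushforward (·, !b) (pF - 2 • h))) :
    CanPlace (G □ ⊤) k (r, b) (pushforward (·, b) pN + pushforward (·, !b) pF) := by
  have htransfer : PebReach (G □ (⊤ : SimpleGraph Bool))
      (pushforward (·, !b) (2 • h)) (pushforward (·, b) h) :=
    pebReach_pushforward_double (Prod.mk_left_injective _) (Prod.mk_left_injective _)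
      (fun v => by simp) h
  refine hc.of_pebReach ?_
  convert pebReach_add (.refl (a := pushforward (·, b) pN + pushforward (·, !b) (pF - 2 • h)))
    htransfer using 1
  · rw [add_assoc, ← map_add _ (pF - 2 • h), tsub_add_cancel_of_le hh]
  · rw [map_add]; abel

theorem PebblingBound.boxProd_top [Fintype V] (h₁ : PebblingBound G m)
    (h₂ : TwoPebblingBound G m) :
    PebblingBound (G □ (⊤ : SimpleGraph Bool)) (2 * m) := by
  rintro ⟨r, b⟩ P hP
  rw [eq_pushforward_add_pushforward P b]
  rw [sum_prod_bool_eq P b] at hP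
  set pN := fun v => P (v, b)
  set pF := fun v => P (v, !b)
  change 2 * m ≤ ∑ v, pN v + ∑ v, pF v at hP
  by_cases hN : m ≤ ∑ v, pN v
  · exact ((h₁ r pN hN).boxProd_top_near b).mono le_self_add
  by_cases hF : m + 1 ≤ ceilHalfSum pF
  · exact ((h₂ r pF hF).boxProd_top_far b).mono le_add_self
  obtain ⟨h, hh, hsum⟩ := exists_le_sum_eq (fun v => pF v / 2) (t := m - ∑ v, pN v)
    (by have := sum_div_two_add_ceilHalfSum pF; omega)
  refine CanPlace.of_transfer (h := h) (fun v => ?_) b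
    (((h₁ r (pN + h) ?_).boxProd_top_near b).mono le_self_add)
  · have : h v ≤ pF v / 2 := hh v
    simp only [Pi.smul_apply, smul_eq_mul]; omega
  · simp only [Pi.add_apply, Finset.sum_add_distrib]; omega

theorem TwoPebblingBound.boxProd_top [Fintype V] (hcard : Fintype.card V ≤ m)
    (h₁ : PebblingBound G m) (h₂ : TwoPebblingBound G m) :
    TwoPebblingBound (G □ (⊤ : SimpleGraph Bool)) (2 * m) := by
  rintro ⟨r, b⟩ P hP
  rw [eq_pushforward_add_pushforward P b]
  rw [ceilHalfSum, sum_prod_bool_eq _ b] at hP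
  set pN := fun v => P (v, b)
  set pF := fun v => P (v, !b)
  change 2 * m + 1 ≤ ceilHalfSum pN + ceilHalfSum pF at hP
  by_cases hN : m + 1 ≤ ceilHalfSum pN
  · exact ((h₂ r pN hN).boxProd_top_near b).mono le_self_add
  obtain ⟨h, hh, hsum⟩ := exists_le_sum_eq (fun v => pF v / 2) (t := ceilHalfSum pF - (m + 1))
    (by have := ceilHalfSum_le_sum_div_two_add_card pF; omega)
  have hh₂ : 2 • h ≤ pF := fun v => by
    have : h v ≤ pF v / 2 := hh v
    simp only [Pi.smul_apply, smul_eq_mul]; omega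
  have hF := ceilHalfSum_sub_two_smul_add hh₂
  refine CanPlace.of_transfer hh₂ b
    (((h₁ r (pN + h) ?_).boxProd_top_near b).add ((h₂ r (pF - 2 • h) ?_).boxProd_top_far b))
  · have := ceilHalfSum_le_sum pN
    simp only [Pi.add_apply, Finset.sum_add_distrib]; omega
  · omega

end BoxProdTop

theorem cubeGraph_adj {n : ℕ} {x y : Fin n → Bool} :
    (cubeGraph n).Adj x y ↔ hammingDist x y = 1 := by
  rw [cubeGraph, fromRel_adj, hammingDist_comm y x, or_self, and_iff_right_iff_imp]
  rintro h rfl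
  simp at h

theorem hammingDist_cons {β : Type*} [DecidableEq β] {n : ℕ} (a b : β) (x y : Fin n → β) :
    hammingDist (Fin.cons a x : Fin (n + 1) → β) (Fin.cons b y) =
      (if a = b then 0 else 1) + hammingDist x y := by
  simp only [hammingDist, Finset.card_filter, Fin.sum_univ_succ, Fin.cons_zero, Fin.cons_succ,
    ite_not]

def cubeGraphSuccIso (n : ℕ) : (cubeGraph n □ (⊤ : SimpleGraph Bool)) ≃g cubeGraph (n + 1) where
  toEquiv := (Equiv.prodComm _ _).trans (Fin.consEquiv fun _ => Bool)
  map_rel_iff' {x y} := by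
    obtain ⟨x, a⟩ := x
    obtain ⟨y, b⟩ := y
    change (cubeGraph (n + 1)).Adj (Fin.cons a x) (Fin.cons b y) ↔ _
    rw [cubeGraph_adj, hammingDist_cons, boxProd_adj, cubeGraph_adj]
    by_cases hab : a = b <;> simp [hab]

theorem cubeGraph_bounds (n : ℕ) :
    PebblingBound (cubeGraph n) (2 ^ n) ∧ TwoPebblingBound (cubeGraph n) (2 ^ n) := by
  induction n with
  | zero =>
    have hsum (r : Fin 0 → Bool) (f : (Fin 0 → Bool) → ℕ) : ∑ v, f v = f r :=
      Fintype.sum_subsingleton f r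
    refine ⟨fun r p hp => ⟨p, .refl, ?_⟩, fun r p hp => ⟨p, .refl, ?_⟩⟩
    · rw [hsum r] at hp; exact hp
    · rw [ceilHalfSum, hsum r] at hp; omega
  | succ n ih =>
    have hcard : Fintype.card (Fin n → Bool) ≤ 2 ^ n := by simp
    rw [pow_succ']
    exact ⟨(ih.1.boxProd_top ih.2).of_iso (cubeGraphSuccIso n),
      (TwoPebblingBound.boxProd_top hcard ih.1 ih.2).of_iso (cubeGraphSuccIso n)⟩

theorem cubeGraph_not_solvable (n : ℕ) :
    ¬ Solvable (cubeGraph n) (fun _ => false) (Pi.single (fun _ => true) (2 ^ n - 1)) := by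
  refine not_solvable_of_weight (fun v => 2 ^ hammingDist v fun _ => true) (fun u v huv => ?_) ?_
  · have := hammingDist_triangle v u fun _ => true
    rw [hammingDist_comm v u, cubeGraph_adj.1 huv] at this
    calc 2 ^ hammingDist v (fun _ => true) ≤ 2 ^ (hammingDist u (fun _ => true) + 1) :=
          Nat.pow_le_pow_right two_pos (by omega)
      _ = 2 * 2 ^ hammingDist u fun _ => true := pow_succ' ..
  · simp [Pi.single_apply, hammingDist]

theorem stmt12_general (n : ℕ) : pebblingNumber (cubeGraph n) = 2 ^ n := by
  have hbound := (cubeGraph_bounds n).1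
  have hlower := sum_lt_pebblingNumber hbound (cubeGraph_not_solvable n)
  rw [Finset.sum_pi_single', if_pos (Finset.mem_univ _)] at hlower
  have := pebblingNumber_le hbound
  have := Nat.one_le_two_pow (n := n)
  omega

theorem stmt12 (n : ℕ) (hn : 2 ≤ n) : pebblingNumber (cubeGraph n) = 2 ^ n :=
  stmt12_general n
end

section
/- Let r, v_1, U = {u_0, u_1, …, u_N} with N = 2^{n+1} be as in the lollipop L_n. Suppose each u_i for 1 ≤ i ≤ N is adjacent to both v_1 and u_0 (and to no other vertices of U). If a configuration places q pebbles in total on U, then one can move at least ⌈(q − 3)/4⌉ pebbles from U onto v_1 when the number a of vertices u_1,…,u_N holding an odd number of pebbles satisfies a ≤ ⌊p(u_0)/2⌋, using only pebbles on U. -/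
open SimpleGraph Finset

/-- A pebbling move whose source vertex lies in the set `S`. -/
def PebMoveFrom {V : Type*} [DecidableEq V] (G : SimpleGraph V) (S : Set V)
    (p q : V → ℕ) : Prop :=
  ∃ u v, u ∈ S ∧ G.Adj u v ∧ 2 ≤ p u ∧
    q = fun x => if x = u then p u - 2 else if x = v then p v + 1 else p x

/-! The greedy strategy: while some spoke holds two pebbles, send them to the target; otherwise,
while some spoke holds one pebble, complete it from the hub and send the pair on; otherwise all
spokes are empty and, as long as the hub holds four pebbles, route them through a spoke.  Each
round delivers one pebble and spends at most four, so `⌊q / 4⌋ = ⌈(q - 3) / 4⌉` pebbles arrive.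
The invariant "odd spokes ≤ hub / 2" survives every round, because a round touching the hub
either removes an odd spoke at the price of two hub pebbles or happens when there are no odd
spokes at all. -/

lemma Finset.sum_add_apply_eq_of_eqOn_erase {ι M : Type*} [DecidableEq ι] [AddCommMonoid M]
    {s : Finset ι} {u : ι} {f g : ι → M} (hu : u ∈ s) (h : ∀ x ∈ s, x ≠ u → f x = g x) :
    ∑ x ∈ s, f x + g u = ∑ x ∈ s, g x + f u := by
  rw [← add_sum_erase s f hu, ← add_sum_erase s g hu,
    sum_congr rfl fun x hx => h x (mem_of_mem_erase hx) (ne_of_mem_erase hx)]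
  abel

-- Counting odd spokes as `∑ p x % 2` lets `omega` track the invariant through a round.
lemma card_filter_odd_eq_sum_mod_two {ι : Type*} (s : Finset ι) (p : ι → ℕ) :
    #{x ∈ s | Odd (p x)} = ∑ x ∈ s, p x % 2 := by
  rw [card_filter]
  refine sum_congr rfl fun x _ => ?_
  split_ifs with h <;> simp only [Nat.odd_iff] at h <;> omega

variable {V : Type*}

structure HubAndSpokes (G : SimpleGraph V) (S : Set V) (c t : V) (W : Finset V) : Prop where
  hub_mem : c ∈ S
  spoke_mem : ∀ u ∈ W, u ∈ S
  hub_ne_target : c ≠ t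
  hub_not_mem : c ∉ W
  target_not_mem : t ∉ W
  adj_hub : ∀ u ∈ W, G.Adj c u
  adj_target : ∀ u ∈ W, G.Adj u t
  nonempty : W.Nonempty

namespace HubAndSpokes

variable {G : SimpleGraph V} {S : Set V} {c t : V} {W : Finset V}

lemma ne_hub (h : HubAndSpokes G S c t W) {x : V} (hx : x ∈ W) : x ≠ c :=
  fun hxc => h.hub_not_mem (hxc ▸ hx)

lemma ne_target (h : HubAndSpokes G S c t W) {x : V} (hx : x ∈ W) : x ≠ t :=
  fun hxt => h.target_not_mem (hxt ▸ hx)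

end HubAndSpokes

variable [DecidableEq V]

def pebbleMove (u v : V) (p : V → ℕ) : V → ℕ :=
  fun x => if x = u then p u - 2 else if x = v then p v + 1 else p x

section pebbleMove

variable {u v x : V} {p : V → ℕ}

lemma pebbleMove_apply_source : pebbleMove u v p u = p u - 2 := if_pos rfl

lemma pebbleMove_apply_target (h : v ≠ u) : pebbleMove u v p v = p v + 1 := by
  simp [pebbleMove, h]

lemma pebbleMove_apply_of_ne (hu : x ≠ u) (hv : x ≠ v) : pebbleMove u v p x = p x := by
  simp [pebbleMove, hu, hv]

lemma PebMoveFrom.of_adj {G : SimpleGraph V} {S : Set V} (hu : u ∈ S) (hadj : G.Adj u v)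
    (hp : 2 ≤ p u) : PebMoveFrom G S p (pebbleMove u v p) :=
  ⟨u, v, hu, hadj, hp, rfl⟩

end pebbleMove

namespace HubAndSpokes

variable {G : SimpleGraph V} {S : Set V} {c t : V} {W : Finset V} {p : V → ℕ} {u : V}

lemma exists_round_of_two_le (h : HubAndSpokes G S c t W) (hu : u ∈ W) (hpu : 2 ≤ p u) :
    ∃ p₁, Relation.ReflTransGen (PebMoveFrom G S) p p₁ ∧ p₁ t = p t + 1 ∧
      (∀ x ∈ W, x ≠ u → p₁ x = p x) ∧ p₁ c = p c ∧ p₁ u + 2 = p u := by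
  refine ⟨pebbleMove u t p, .single (.of_adj (h.spoke_mem u hu) (h.adj_target u hu) hpu),
    pebbleMove_apply_target (h.ne_target hu).symm,
    fun x hx hxu => pebbleMove_apply_of_ne hxu (h.ne_target hx),
    pebbleMove_apply_of_ne (h.ne_hub hu).symm h.hub_ne_target, ?_⟩
  rw [pebbleMove_apply_source]
  omega

lemma exists_round_of_eq_one (h : HubAndSpokes G S c t W) (hu : u ∈ W) (hpu : p u = 1)
    (hpc : 2 ≤ p c) :
    ∃ p₁, Relation.ReflTransGen (PebMoveFrom G S) p p₁ ∧ p₁ t = p t + 1 ∧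
      (∀ x ∈ W, x ≠ u → p₁ x = p x) ∧ p₁ c + 2 = p c ∧ p₁ u = 0 := by
  have huc := h.ne_hub hu
  have hut := h.ne_target hu
  have m₁ := PebMoveFrom.of_adj h.hub_mem (h.adj_hub u hu) hpc
  have m₂ := PebMoveFrom.of_adj (S := S) (h.spoke_mem u hu) (h.adj_target u hu)
    (p := pebbleMove c u p) (by rw [pebbleMove_apply_target huc]; omega)
  refine ⟨_, .tail (.single m₁) m₂, ?_, fun x hx hxu => ?_, ?_, ?_⟩
  · rw [pebbleMove_apply_target hut.symm, pebbleMove_apply_of_ne h.hub_ne_target.symm hut.symm]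
  · rw [pebbleMove_apply_of_ne hxu (h.ne_target hx), pebbleMove_apply_of_ne (h.ne_hub hx) hxu]
  · rw [pebbleMove_apply_of_ne huc.symm h.hub_ne_target, pebbleMove_apply_source]
    omega
  · rw [pebbleMove_apply_source, pebbleMove_apply_target huc, hpu]

lemma exists_round_of_four_le_hub (h : HubAndSpokes G S c t W) (hu : u ∈ W) (hpc : 4 ≤ p c) :
    ∃ p₁, Relation.ReflTransGen (PebMoveFrom G S) p p₁ ∧ p₁ t = p t + 1 ∧
      (∀ x ∈ W, x ≠ u → p₁ x = p x) ∧ p₁ c + 4 = p c ∧ p₁ u = p u := by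
  have huc := h.ne_hub hu
  have hut := h.ne_target hu
  have hct := h.hub_ne_target
  have m₁ := PebMoveFrom.of_adj h.hub_mem (h.adj_hub u hu) (by omega : 2 ≤ p c)
  have m₂ := PebMoveFrom.of_adj h.hub_mem (h.adj_hub u hu)
    (p := pebbleMove c u p) (by rw [pebbleMove_apply_source]; omega)
  have m₃ := PebMoveFrom.of_adj (S := S) (h.spoke_mem u hu) (h.adj_target u hu)
    (p := pebbleMove c u (pebbleMove c u p))
    (by rw [pebbleMove_apply_target huc, pebbleMove_apply_target huc]; omega)
  refine ⟨_, .tail (.tail (.single m₁) m₂) m₃, ?_, fun x hx hxu => ?_, ?_, ?_⟩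
  · rw [pebbleMove_apply_target hut.symm, pebbleMove_apply_of_ne hct.symm hut.symm,
      pebbleMove_apply_of_ne hct.symm hut.symm]
  · rw [pebbleMove_apply_of_ne hxu (h.ne_target hx), pebbleMove_apply_of_ne (h.ne_hub hx) hxu,
      pebbleMove_apply_of_ne (h.ne_hub hx) hxu]
  · rw [pebbleMove_apply_of_ne huc.symm hct, pebbleMove_apply_source, pebbleMove_apply_source]
    omega
  · rw [pebbleMove_apply_source, pebbleMove_apply_target huc, pebbleMove_apply_target huc]
    omega

lemma exists_round (h : HubAndSpokes G S c t W) (hp : ∑ x ∈ W, p x % 2 ≤ p c / 2)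
    (hq : 4 ≤ p c + ∑ x ∈ W, p x) :
    ∃ u ∈ W, ∃ p₁, Relation.ReflTransGen (PebMoveFrom G S) p p₁ ∧ p₁ t = p t + 1 ∧
      (∀ x ∈ W, x ≠ u → p₁ x = p x) ∧
      (p₁ c = p c ∧ p₁ u + 2 = p u ∨
        p₁ c + 2 = p c ∧ p u = 1 ∧ p₁ u = 0 ∨
        p₁ c + 4 = p c ∧ p₁ u = p u ∧ ∑ x ∈ W, p x % 2 = 0) := by
  by_cases h2 : ∃ u ∈ W, 2 ≤ p u
  · obtain ⟨u, hu, hpu⟩ := h2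
    obtain ⟨p₁, hreach, ht, hoff, hc, hu₁⟩ := h.exists_round_of_two_le hu hpu
    exact ⟨u, hu, p₁, hreach, ht, hoff, .inl ⟨hc, hu₁⟩⟩
  by_cases h1 : ∃ u ∈ W, p u = 1
  · obtain ⟨u, hu, hpu⟩ := h1
    have hodd : p u % 2 ≤ ∑ x ∈ W, p x % 2 :=
      single_le_sum (f := fun x => p x % 2) (fun _ _ => Nat.zero_le _) hu
    obtain ⟨p₁, hreach, ht, hoff, hc, hu₁⟩ := h.exists_round_of_eq_one hu hpu (by omega)
    exact ⟨u, hu, p₁, hreach, ht, hoff, .inr (.inl ⟨hc, hpu, hu₁⟩)⟩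
  push Not at h2 h1
  have hzero : ∀ x ∈ W, p x = 0 := fun x hx => by have := h2 x hx; have := h1 x hx; omega
  obtain ⟨u, hu⟩ := h.nonempty
  have hpc : 4 ≤ p c := by rw [sum_eq_zero hzero] at hq; omega
  obtain ⟨p₁, hreach, ht, hoff, hc, hu₁⟩ := h.exists_round_of_four_le_hub hu hpc
  exact ⟨u, hu, p₁, hreach, ht, hoff,
    .inr (.inr ⟨hc, hu₁, sum_eq_zero fun x hx => by simp [hzero x hx]⟩)⟩

theorem exists_reach_target (h : HubAndSpokes G S c t W) (p : V → ℕ)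
    (hp : #{u ∈ W | Odd (p u)} ≤ p c / 2) :
    ∃ p', Relation.ReflTransGen (PebMoveFrom G S) p p' ∧
      p t + (p c + ∑ u ∈ W, p u) / 4 ≤ p' t := by
  rw [card_filter_odd_eq_sum_mod_two] at hp
  induction hq : p c + ∑ u ∈ W, p u using Nat.strong_induction_on generalizing p with
  | _ q ih =>
  by_cases hq4 : q < 4
  · exact ⟨p, .refl, by omega⟩
  obtain ⟨u, hu, p₁, hreach, ht, hoff, hround⟩ := h.exists_round hp (by omega)
  have hsum := sum_add_apply_eq_of_eqOn_erase hu hoff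
  have hmod := sum_add_apply_eq_of_eqOn_erase (f := fun x => p₁ x % 2) hu
    fun x hx hxu => congrArg (· % 2) (hoff x hx hxu)
  have hprogress : p₁ c + ∑ x ∈ W, p₁ x < q ∧ q ≤ p₁ c + ∑ x ∈ W, p₁ x + 4 ∧
      ∑ x ∈ W, p₁ x % 2 ≤ p₁ c / 2 := by
    rcases hround with ⟨hc, hu₁⟩ | ⟨hc, hu₀, hu₁⟩ | ⟨hc, hu₁, hW⟩ <;> omega
  obtain ⟨p', hreach', ht'⟩ := ih _ hprogress.1 p₁ hprogress.2.2 rfl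
  exact ⟨p', hreach.trans hreach', by omega⟩

end HubAndSpokes

section lollipop

variable {n m : ℕ} {j : Fin (m + 1)}

lemma lollipop_adj_inr_zero (hj : j ≠ 0) : (lollipop n m).Adj (.inr 0) (.inr j) := by
  rw [lollipop, fromRel_adj]
  exact ⟨by simpa using hj.symm, .inl ⟨rfl, hj⟩⟩

lemma lollipop_adj_inl_zero (hj : j ≠ 0) : (lollipop n m).Adj (.inr j) (.inl 0) := by
  rw [lollipop, fromRel_adj]
  exact ⟨by simp, .inr ⟨rfl, hj⟩⟩

lemma hubAndSpokes_lollipop (hm : m ≠ 0) :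
    HubAndSpokes (lollipop n m) {x | ∃ j, x = .inr j} (.inr 0) (.inl 0)
      ((univ.erase 0).map .inr) where
  hub_mem := ⟨0, rfl⟩
  spoke_mem := by simp
  hub_ne_target := by simp
  hub_not_mem := by simp
  target_not_mem := by simp
  adj_hub := by simpa using fun j hj => lollipop_adj_inr_zero hj
  adj_target := by simpa using fun j hj => lollipop_adj_inl_zero hj
  nonempty := ⟨.inr (Fin.last m), mem_map_of_mem _ <|
    mem_erase.2 ⟨fun h => hm (by simpa using congrArg Fin.val h), mem_univ _⟩⟩

end lollipop

lemma ceil_sub_div_eq_div (q d : ℕ) (hd : 0 < d) : ⌈((q : ℚ) - (d - 1)) / d⌉ = (q / d : ℕ) := by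
  have hdq : (0 : ℚ) < d := by exact_mod_cast hd
  have hqr : (q : ℚ) = d * (q / d : ℕ) + (q % d : ℕ) := by
    exact_mod_cast (Nat.div_add_mod q d).symm
  have hr : ((q % d : ℕ) : ℚ) + 1 ≤ d := by exact_mod_cast Nat.mod_lt q hd
  rw [Int.ceil_eq_iff, lt_div_iff₀ hdq, div_le_iff₀ hdq, Int.cast_natCast]
  constructor <;> nlinarith

theorem stmt18_general (n : ℕ)
    (p : (Fin (n + 1) ⊕ Fin (2 ^ (n + 1) + 1)) → ℕ)
    (q : ℕ) (hq : q = ∑ j : Fin (2 ^ (n + 1) + 1), p (Sum.inr j))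
    (a : ℕ)
    (ha : a = (Finset.univ.filter
      fun j : Fin (2 ^ (n + 1) + 1) => j ≠ 0 ∧ Odd (p (Sum.inr j))).card)
    (hab : a ≤ p (Sum.inr 0) / 2) :
    ∃ p', Relation.ReflTransGen
        (PebMoveFrom (lollipop n (2 ^ (n + 1))) {x | ∃ j, x = Sum.inr j}) p p' ∧
      (p (Sum.inl 0) : ℤ) + ⌈((q : ℚ) - 3) / 4⌉ ≤ (p' (Sum.inl 0) : ℤ) := by
  have hodd : #{x ∈ (univ.erase 0).map .inr | Odd (p x)} ≤ p (.inr 0) / 2 := by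
    rw [filter_map, card_map]
    simpa [ha, ← filter_ne', filter_filter] using hab
  obtain ⟨p', hreach, hp'⟩ :=
    (hubAndSpokes_lollipop (n := n) (pow_ne_zero _ two_ne_zero)).exists_reach_target p hodd
  have hq' : q = p (.inr 0) + ∑ x ∈ (univ.erase 0).map .inr, p x := by
    rw [hq, sum_map, ← add_sum_erase _ _ (mem_univ 0)]
    rfl
  refine ⟨p', hreach, ?_⟩
  have hceil := ceil_sub_div_eq_div q 4 (by norm_num)
  norm_num at hceil
  rw [hceil, hq']
  exact_mod_cast hp'

theorem stmt18 (n : ℕ) (hn : 1 ≤ n)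
    (p : (Fin (n + 1) ⊕ Fin (2 ^ (n + 1) + 1)) → ℕ)
    (q : ℕ) (hq : q = ∑ j : Fin (2 ^ (n + 1) + 1), p (Sum.inr j))
    (a : ℕ)
    (ha : a = (Finset.univ.filter
      fun j : Fin (2 ^ (n + 1) + 1) => j ≠ 0 ∧ Odd (p (Sum.inr j))).card)
    (hab : a ≤ p (Sum.inr 0) / 2) :
    ∃ p', Relation.ReflTransGen
        (PebMoveFrom (lollipop n (2 ^ (n + 1))) {x | ∃ j, x = Sum.inr j}) p p' ∧
      (p (Sum.inl 0) : ℤ) + ⌈((q : ℚ) - 3) / 4⌉ ≤ (p' (Sum.inl 0) : ℤ) :=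
  stmt18_general n p q hq a ha hab
end
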